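/- Let q ∈ L¹[0,1] be real-valued and let {λₙ} be the eigenvalues of the Neumann problem -y''+qy=λy, y'(0)=y'(1)=0. Assume the standard asymptotics λₙ = (nπ)² + ∫₀¹ q(x) dx + o(1) as n → ∞. If λ₀ ≥ 0 and λₙ = (nπ)² for all n larger than some n₀, then q = 0 almost everywhere. -/

import Mathlib

open MeasureTheory intervalIntegral Complex Filter

/-- The (real-valued) Rayleigh quotient of `y` for the operator `-y'' + q y` on `[0,1]`. -/
noncomputable def rayleighQuotientR (q : ℝ → ℝ) (y : ℝ → ℂ) : ℝ :=
  (∫ x in (0:ℝ)..1,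
      ((-(starRingEnd ℂ) (y x) * deriv (deriv y) x).re + q x * ‖y x‖^2)) /
  (∫ x in (0:ℝ)..1, ‖y x‖^2)

/-- Neumann boundary conditions on `[0,1]`. -/
def NeumannBC (y : ℝ → ℂ) : Prop := deriv y 0 = 0 ∧ deriv y 1 = 0

/-- `y` is a Neumann eigenfunction with eigenvalue `lam`. -/
def IsNeumannEigenfunction (q : ℝ → ℝ) (lam : ℝ) (y : ℝ → ℂ) : Prop :=
  ContDiff ℝ 2 y ∧ (∃ x ∈ Set.Icc (0:ℝ) 1, y x ≠ 0) ∧ NeumannBC y ∧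
  ∀ᵐ x, x ∈ Set.Icc (0:ℝ) 1 → -deriv (deriv y) x + (q x : ℂ) * y x = (lam : ℂ) * y x

/-- `lam` is a Neumann eigenvalue. -/
def IsNeumannEigenvalue (q : ℝ → ℝ) (lam : ℝ) : Prop := ∃ y, IsNeumannEigenfunction q lam y

/-- `lam0` is the smallest Neumann eigenvalue. -/
def IsFirstNeumannEigenvalue (q : ℝ → ℝ) (lam0 : ℝ) : Prop :=
  IsNeumannEigenvalue q lam0 ∧ ∀ lam, IsNeumannEigenvalue q lam → lam0 ≤ lam

/-!
The asymptotics, together with `λₙ = (nπ)²` for large `n`, force `∫₀¹ q = 0`, which is the Rayleigh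
quotient of the constant function `1`. Since `λ₀ ≥ 0` bounds the Rayleigh quotient from below, `1`
is a minimiser. Perturbing it to `1 + t g` with `g` smooth and supported in `(0,1)` keeps the Neumann
conditions, and the derivative of the quotient at `t = 0` is `2 ∫₀¹ g q`; so this vanishes for
every test function `g`, and `q = 0` almost everywhere.
-/

open scoped ContDiff

lemma deriv_ofReal_comp {r : ℝ → ℝ} (hr : Differentiable ℝ r) :
    deriv (fun x => (r x : ℂ)) = fun x => ((deriv r x : ℝ) : ℂ) :=
  funext fun x => (hr x).hasDerivAt.ofReal_comp.deriv

lemma deriv_deriv_ofReal_comp {r : ℝ → ℝ} (hr : ContDiff ℝ 2 r) :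
    deriv (deriv fun x => (r x : ℂ)) = fun x => ((deriv (deriv r) x : ℝ) : ℂ) := by
  have hr' : Differentiable ℝ (deriv r) :=
    (hr.iterate_deriv' 1 1).differentiable (by norm_num)
  rw [deriv_ofReal_comp (hr.differentiable (by norm_num)), deriv_ofReal_comp hr']

lemma rayleighQuotientR_ofReal (q : ℝ → ℝ) {r : ℝ → ℝ} (hr : ContDiff ℝ 2 r) :
    rayleighQuotientR q (fun x => (r x : ℂ)) =
      (∫ x in (0:ℝ)..1, (-r x * deriv (deriv r) x + q x * r x ^ 2)) /
        ∫ x in (0:ℝ)..1, r x ^ 2 := by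
  simp only [rayleighQuotientR, deriv_deriv_ofReal_comp hr, Complex.conj_ofReal,
    ← Complex.ofReal_neg, ← Complex.ofReal_mul, Complex.ofReal_re, Complex.norm_real,
    Real.norm_eq_abs, sq_abs]

lemma intervalIntegral_add_mul_add_sq_mul {a b c : ℝ → ℝ} {u v : ℝ}
    (ha : IntervalIntegrable a volume u v) (hb : IntervalIntegrable b volume u v)
    (hc : IntervalIntegrable c volume u v) (t : ℝ) :
    ∫ x in u..v, (a x + t * b x + t ^ 2 * c x) =
      (∫ x in u..v, a x) + t * (∫ x in u..v, b x) + t ^ 2 * ∫ x in u..v, c x := by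
  rw [integral_add (ha.add (hb.const_mul t)) (hc.const_mul _), integral_add ha (hb.const_mul t),
    intervalIntegral.integral_const_mul, intervalIntegral.integral_const_mul]

lemma rayleighQuotientR_one_add_mul {q g : ℝ → ℝ} (hq : IntervalIntegrable q volume 0 1)
    (hg : ContDiff ℝ 2 g) (t : ℝ) :
    rayleighQuotientR q (fun x => ((1 + t * g x : ℝ) : ℂ)) =
      ((∫ x in (0:ℝ)..1, q x) + t * (∫ x in (0:ℝ)..1, (2 * (g x * q x) - deriv (deriv g) x))
          + t ^ 2 * ∫ x in (0:ℝ)..1, (g x ^ 2 * q x - g x * deriv (deriv g) x)) /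
        (1 + t * (∫ x in (0:ℝ)..1, 2 * g x) + t ^ 2 * ∫ x in (0:ℝ)..1, g x ^ 2) := by
  have hgc : Continuous g := hg.continuous
  have hg'' : Continuous (deriv (deriv g)) := (hg.iterate_deriv' 0 2).continuous
  have hcont {f : ℝ → ℝ} (hf : Continuous f) : IntervalIntegrable f volume 0 1 :=
    hf.intervalIntegrable 0 1
  have hmul {f : ℝ → ℝ} (hf : Continuous f) : IntervalIntegrable (fun x => f x * q x) volume 0 1 :=
    hq.continuousOn_mul hf.continuousOn
  have hderiv : deriv (deriv fun x => 1 + t * g x) = fun x => t * deriv (deriv g) x := by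
    simp only [deriv_const_add', deriv_const_mul_field']
  have hnum : ∫ x in (0:ℝ)..1, (-(1 + t * g x) * (t * deriv (deriv g) x) + q x * (1 + t * g x) ^ 2)
      = ∫ x in (0:ℝ)..1, (q x + t * (2 * (g x * q x) - deriv (deriv g) x)
          + t ^ 2 * (g x ^ 2 * q x - g x * deriv (deriv g) x)) :=
    integral_congr fun x _ => by ring
  have hden : ∫ x in (0:ℝ)..1, (1 + t * g x) ^ 2
      = ∫ x in (0:ℝ)..1, (1 + t * (2 * g x) + t ^ 2 * g x ^ 2) :=
    integral_congr fun x _ => by ring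
  rw [rayleighQuotientR_ofReal q (contDiff_const.add (contDiff_const.mul hg)), hderiv, hnum, hden,
    intervalIntegral_add_mul_add_sq_mul hq (((hmul hgc).const_mul 2).sub (hcont hg''))
      ((hmul (hgc.fun_pow 2)).sub (hcont (hgc.fun_mul hg''))),
    intervalIntegral_add_mul_add_sq_mul intervalIntegrable_const
      (hcont (continuous_const.fun_mul hgc)) (hcont (hgc.fun_pow 2)), integral_one, sub_zero]

lemma eq_zero_of_forall_nonneg_div_quadratic {b c d e f : ℝ} (hd : d ≠ 0)
    (h : ∀ t : ℝ, 0 ≤ (t * b + t ^ 2 * c) / (d + t * e + t ^ 2 * f)) : b = 0 := by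
  have hmin : IsLocalMin (fun t : ℝ => (t * b + t ^ 2 * c) / (d + t * e + t ^ 2 * f)) 0 :=
    Filter.Eventually.of_forall fun t => by simpa using h t
  have hN : HasDerivAt (fun t : ℝ => t * b + t ^ 2 * c) b 0 := by
    simpa using ((hasDerivAt_id' 0).mul_const b).fun_add ((hasDerivAt_pow 2 0).mul_const c)
  have hD : HasDerivAt (fun t : ℝ => d + t * e + t ^ 2 * f) e 0 := by
    simpa using (((hasDerivAt_id' 0).mul_const e).const_add d).fun_add
      ((hasDerivAt_pow 2 0).mul_const f)
  simpa [hd] using hmin.hasDerivAt_eq_zero (hN.div hD (by simpa using hd))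

lemma eq_zero_of_tendsto_sub_add_of_eventuallyEq {α E : Type*} [AddCommGroup E]
    [TopologicalSpace E] [T2Space E] {l : Filter α} [l.NeBot] {f g : α → E} {c : E}
    (h : Tendsto (fun n => f n - (g n + c)) l (nhds 0)) (hfg : f =ᶠ[l] g) : c = 0 := by
  have hc : Tendsto (fun _ => -c) l (nhds 0) :=
    h.congr' (hfg.mono fun n hn => by simp [hn])
  simpa using tendsto_nhds_unique tendsto_const_nhds hc

/-- If the constant `1` minimises the Rayleigh quotient, its first variation `2 ∫ g q` in the
direction of a test function `g` vanishes. -/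
lemma integral_mul_eq_zero_of_rayleighQuotientR_nonneg {q g : ℝ → ℝ}
    (hq : IntervalIntegrable q volume 0 1) (hq0 : ∫ x in (0:ℝ)..1, q x = 0)
    (hR : ∀ y : ℝ → ℂ, ContDiff ℝ 2 y → (∃ x ∈ Set.Icc (0:ℝ) 1, y x ≠ 0) →
      NeumannBC y → 0 ≤ rayleighQuotientR q y)
    (hg : ContDiff ℝ 2 g) (hgt : tsupport g ⊆ Set.Ioo 0 1) :
    ∫ x in (0:ℝ)..1, g x * q x = 0 := by
  have hbdry : ∀ x ∉ Set.Ioo (0:ℝ) 1, g x = 0 ∧ deriv g x = 0 := fun x hx =>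
    ⟨image_eq_zero_of_notMem_tsupport (mt (@hgt x) hx),
      by_contra fun h => hx (hgt (support_deriv_subset h))⟩
  obtain ⟨hg0, hg'0⟩ := hbdry 0 (by simp)
  obtain ⟨-, hg'1⟩ := hbdry 1 (by simp)
  have hR_line (t : ℝ) : 0 ≤ rayleighQuotientR q (fun x => ((1 + t * g x : ℝ) : ℂ)) := by
    have hy : ContDiff ℝ 2 fun x => 1 + t * g x := contDiff_const.add (contDiff_const.mul hg)
    have hdy : deriv (fun x => ((1 + t * g x : ℝ) : ℂ)) = fun x => ((t * deriv g x : ℝ) : ℂ) := by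
      rw [deriv_ofReal_comp (hy.differentiable (by norm_num)), deriv_const_add',
        deriv_const_mul_field']
    exact hR _ (ofRealCLM.contDiff.comp hy) ⟨0, by simp, by simp [hg0]⟩
      ⟨by rw [hdy]; simp [hg'0], by rw [hdy]; simp [hg'1]⟩
  have hvariation := eq_zero_of_forall_nonneg_div_quadratic one_ne_zero fun t => by
    simpa only [rayleighQuotientR_one_add_mul hq hg, hq0, zero_add] using hR_line t
  have hg' : Differentiable ℝ (deriv g) := (hg.iterate_deriv' 1 1).differentiable (by norm_num)
  have hg'' : Continuous (deriv (deriv g)) := (hg.iterate_deriv' 0 2).continuous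
  rw [integral_sub ((hq.continuousOn_mul hg.continuous.continuousOn).const_mul 2) (hg''.intervalIntegrable 0 1),
    intervalIntegral.integral_const_mul,
    integral_deriv_eq_sub (fun x _ => hg' x) (hg''.intervalIntegrable 0 1), hg'0, hg'1] at hvariation
  linarith

theorem ambarzumyan_neumann_reduced_general (q : ℝ → ℝ)
    (hq : IntegrableOn q (Set.Icc (0:ℝ) 1))
    (lam : ℕ → ℝ)
    (hvar : ∀ y : ℝ → ℂ, ContDiff ℝ 2 y → (∃ x ∈ Set.Icc (0:ℝ) 1, y x ≠ 0) →
      NeumannBC y → lam 0 ≤ rayleighQuotientR q y)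
    (hasymp : Tendsto
      (fun n : ℕ => lam n - ((n * Real.pi)^2 + ∫ x in (0:ℝ)..1, q x)) atTop (nhds 0))
    (h0 : lam 0 ≥ 0)
    (hn0 : ∃ n0 : ℕ, ∀ n > n0, lam n = (n * Real.pi)^2) :
    ∀ᵐ x, x ∈ Set.Icc (0:ℝ) 1 → q x = 0 := by
  obtain ⟨n0, hn0⟩ := hn0
  have hq0 : ∫ x in (0:ℝ)..1, q x = 0 :=
    eq_zero_of_tendsto_sub_add_of_eventuallyEq hasymp ((eventually_gt_atTop n0).mono hn0)
  have hR : ∀ y : ℝ → ℂ, ContDiff ℝ 2 y → (∃ x ∈ Set.Icc (0:ℝ) 1, y x ≠ 0) →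
      NeumannBC y → 0 ≤ rayleighQuotientR q y :=
    fun y hy hy0 hbc => h0.trans (hvar y hy hy0 hbc)
  have hIoo : ∀ᵐ x, x ∈ Set.Ioo (0:ℝ) 1 → q x = 0 := by
    refine isOpen_Ioo.ae_eq_zero_of_integral_contDiff_smul_eq_zero
      (hq.mono_set Set.Ioo_subset_Icc_self).locallyIntegrableOn fun g hg _ hgt => ?_
    have hsupp : Function.support (fun x => g x • q x) ⊆ Set.Ioc 0 1 :=
      (Function.support_smul_subset_left g q).trans
        ((subset_tsupport g).trans (hgt.trans Set.Ioo_subset_Ioc_self))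
    rw [← intervalIntegral.integral_eq_integral_of_support_subset hsupp]
    exact integral_mul_eq_zero_of_rayleighQuotientR_nonneg
      ((intervalIntegrable_iff_integrableOn_Icc_of_le zero_le_one).mpr hq) hq0 hR
      (hg.of_le (by norm_cast)) hgt
  filter_upwards [hIoo, Ioo_ae_eq_Icc (a := (0:ℝ)) (b := 1)] with x hx hIcc hx'
  exact hx (hIcc.mpr hx')

/-- Theorem 5(b): Neumann eigenvalues `λₙ` with the standard asymptotics
`λₙ = (nπ)² + ∫₀¹ q + o(1)`. If `λ₀ ≥ 0` and `λₙ = (nπ)²` for all `n > n₀`, then `q = 0`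
a.e. -/
theorem ambarzumyan_neumann_reduced (q : ℝ → ℝ)
    (hq : IntegrableOn q (Set.Icc (0:ℝ) 1))
    (lam : ℕ → ℝ)
    (hfirst : IsFirstNeumannEigenvalue q (lam 0))
    (heig : ∀ n, IsNeumannEigenvalue q (lam n))
    (hvar : ∀ y : ℝ → ℂ, ContDiff ℝ 2 y → (∃ x ∈ Set.Icc (0:ℝ) 1, y x ≠ 0) →
      NeumannBC y → lam 0 ≤ rayleighQuotientR q y)
    (hasymp : Tendsto
      (fun n : ℕ => lam n - ((n * Real.pi)^2 + ∫ x in (0:ℝ)..1, q x)) atTop (nhds 0))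
    (h0 : lam 0 ≥ 0)
    (hn0 : ∃ n0 : ℕ, ∀ n > n0, lam n = (n * Real.pi)^2) :
    ∀ᵐ x, x ∈ Set.Icc (0:ℝ) 1 → q x = 0 :=
  ambarzumyan_neumann_reduced_general q hq lam hvar hasymp h0 hn0
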